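/- arXiv:2009.08663 — 2 statements merged into one kernel-verified Lean document; each statement's English description precedes it below -/
import Mathlib

section
/- Let K be a field with the trivial absolute value and E a finite-dimensional K-vector space. The map sending a decreasing, exhaustive, separated, left-continuous ℝ-filtration (F^t)_{t∈ℝ} of E to the function ‖x‖_F := exp(−sup{t : x ∈ F^t E}) (with ‖0‖ = 0) is a bijection between the set of such ℝ-filtrations on E and the set of ultrametric norms on E over (K, |·|₀). -/
/-- An ultrametric norm on a vector space `E` over a field `K` equipped with the
trivial absolute value: `‖x‖ = 0 ↔ x = 0`, `‖c • x‖ = |c|₀ ‖x‖` (i.e. `‖c • x‖ = ‖x‖`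
for `c ≠ 0`), and the strong triangle inequality. -/
def IsUltraNorm (K : Type*) {E : Type*} [Field K] [AddCommGroup E] [Module K E]
    (n : E → ℝ) : Prop :=
  (∀ x, 0 ≤ n x) ∧ (∀ x, n x = 0 ↔ x = 0) ∧
  (∀ (c : K) (x : E), c ≠ 0 → n (c • x) = n x) ∧
  (∀ x y, n (x + y) ≤ max (n x) (n y))

/-- A decreasing, exhaustive, separated, left-continuous ℝ-filtration of `E`. -/
structure RFiltration (K E : Type*) [Field K] [AddCommGroup E] [Module K E] where
  F : ℝ → Submodule K E
  antitone : ∀ ⦃s t : ℝ⦄, s ≤ t → F t ≤ F s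
  exhaustive : ∃ t : ℝ, F t = ⊤
  separated : ∃ t : ℝ, F t = ⊥
  leftContinuous : ∀ t : ℝ, F t = ⨅ (s : ℝ) (_ : s < t), F s

open Classical

/-- The norm associated to an ℝ-filtration: `‖x‖ = exp(−sup{t : x ∈ F^t E})`, `‖0‖ = 0`. -/
noncomputable def normOfFiltration {K E : Type*} [Field K] [AddCommGroup E] [Module K E]
    (𝓕 : RFiltration K E) : E → ℝ :=
  fun x => if x = 0 then 0 else Real.exp (-(sSup {t : ℝ | x ∈ 𝓕.F t}))

section Helpers

variable {K E : Type*} [Field K] [AddCommGroup E] [Module K E]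

namespace RFiltration

variable (𝓕 : RFiltration K E)

lemma set_nonempty (x : E) : {t : ℝ | x ∈ 𝓕.F t}.Nonempty := by
  obtain ⟨t, ht⟩ := 𝓕.exhaustive
  exact ⟨t, by simp [ht]⟩

lemma bddAbove_set {x : E} (hx : x ≠ 0) : BddAbove {t : ℝ | x ∈ 𝓕.F t} := by
  obtain ⟨t₀, ht₀⟩ := 𝓕.separated
  refine ⟨t₀, fun t ht => ?_⟩
  by_contra h
  push_neg at h
  have h2 := 𝓕.antitone h.le ht
  rw [ht₀] at h2
  exact hx (by simpa using h2)

lemma mem_sSup {x : E} (hx : x ≠ 0) : x ∈ 𝓕.F (sSup {t : ℝ | x ∈ 𝓕.F t}) := by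
  rw [𝓕.leftContinuous]
  simp only [Submodule.mem_iInf]
  intro s hs
  obtain ⟨u, hu, hsu⟩ := exists_lt_of_lt_csSup (𝓕.set_nonempty x) hs
  exact 𝓕.antitone hsu.le hu

lemma mem_iff {x : E} (hx : x ≠ 0) (t : ℝ) :
    x ∈ 𝓕.F t ↔ t ≤ sSup {t : ℝ | x ∈ 𝓕.F t} :=
  ⟨fun h => le_csSup (𝓕.bddAbove_set hx) h, fun h => 𝓕.antitone h (𝓕.mem_sSup hx)⟩

lemma norm_zero : normOfFiltration 𝓕 (0 : E) = 0 := by simp [normOfFiltration]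

lemma norm_ne_zero {x : E} (hx : x ≠ 0) :
    normOfFiltration 𝓕 x = Real.exp (-(sSup {t : ℝ | x ∈ 𝓕.F t})) := by
  simp [normOfFiltration, hx]

lemma norm_nonneg (x : E) : 0 ≤ normOfFiltration 𝓕 x := by
  rcases eq_or_ne x 0 with rfl | hx
  · rw [𝓕.norm_zero]
  · rw [𝓕.norm_ne_zero hx]; exact (Real.exp_pos _).le

lemma ext' {𝓕 𝓖 : RFiltration K E} (h : 𝓕.F = 𝓖.F) : 𝓕 = 𝓖 := by
  cases 𝓕; cases 𝓖; simpa using h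

lemma isUltraNorm : IsUltraNorm K (normOfFiltration 𝓕) := by
  refine ⟨𝓕.norm_nonneg, fun x => ?_, fun c x hc => ?_, fun x y => ?_⟩
  · constructor
    · intro h
      by_contra hx
      rw [𝓕.norm_ne_zero hx] at h
      exact (Real.exp_pos _).ne' h
    · rintro rfl; exact 𝓕.norm_zero
  · rcases eq_or_ne x 0 with rfl | hx
    · rw [smul_zero]
    · have hcx : c • x ≠ 0 := by simp [smul_eq_zero, hc, hx]
      rw [𝓕.norm_ne_zero hcx, 𝓕.norm_ne_zero hx]
      have hset : {t : ℝ | c • x ∈ 𝓕.F t} = {t : ℝ | x ∈ 𝓕.F t} :=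
        Set.ext fun t => Submodule.smul_mem_iff _ hc
      rw [hset]
  · rcases eq_or_ne x 0 with rfl | hx
    · rw [zero_add]; exact le_max_right _ _
    rcases eq_or_ne y 0 with rfl | hy
    · rw [add_zero]; exact le_max_left _ _
    rcases eq_or_ne (x + y) 0 with hxy | hxy
    · rw [hxy, 𝓕.norm_zero]
      exact le_max_of_le_left (𝓕.norm_nonneg x)
    · set Tx := sSup {t : ℝ | x ∈ 𝓕.F t} with hTx
      set Ty := sSup {t : ℝ | y ∈ 𝓕.F t} with hTy
      have hmem : x + y ∈ 𝓕.F (min Tx Ty) :=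
        Submodule.add_mem _ ((𝓕.mem_iff hx _).2 (min_le_left _ _))
          ((𝓕.mem_iff hy _).2 (min_le_right _ _))
      have hle : min Tx Ty ≤ sSup {t : ℝ | x + y ∈ 𝓕.F t} := (𝓕.mem_iff hxy _).1 hmem
      rw [𝓕.norm_ne_zero hxy, 𝓕.norm_ne_zero hx, 𝓕.norm_ne_zero hy]
      have h1 : Real.exp (-(sSup {t : ℝ | x + y ∈ 𝓕.F t})) ≤ Real.exp (-(min Tx Ty)) :=
        Real.exp_le_exp.2 (neg_le_neg hle)
      refine h1.trans (le_of_eq ?_)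
      rcases le_total Tx Ty with h | h
      · rw [min_eq_left h, max_eq_left (Real.exp_le_exp.2 (neg_le_neg h))]
      · rw [min_eq_right h, max_eq_right (Real.exp_le_exp.2 (neg_le_neg h))]

end RFiltration

namespace IsUltraNorm

variable {n : E → ℝ} (hn : IsUltraNorm K n)
include hn

/-- The level submodule `{x | ‖x‖ ≤ c}` of an ultrametric norm. -/
def level (c : ℝ) : Submodule K E where
  carrier := {x | x = 0 ∨ n x ≤ c}
  zero_mem' := Or.inl rfl
  add_mem' := by
    intro x y hx hy
    rcases hx with rfl | hx
    · rw [zero_add]; exact hy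
    rcases hy with rfl | hy
    · rw [add_zero]; exact Or.inr hx
    · exact Or.inr ((hn.2.2.2 x y).trans (max_le hx hy))
  smul_mem' := by
    intro a x hx
    rcases hx with rfl | hx
    · rw [smul_zero]; exact Or.inl rfl
    · rcases eq_or_ne a 0 with rfl | ha
      · rw [zero_smul]; exact Or.inl rfl
      · exact Or.inr (le_of_le_of_eq (le_of_eq (hn.2.2.1 a x ha)) rfl |>.trans hx)

lemma mem_level {c : ℝ} {x : E} : x ∈ hn.level c ↔ x = 0 ∨ n x ≤ c := Iff.rfl

lemma bounded [FiniteDimensional K E] : ∃ M : ℝ, ∀ x, n x ≤ M := by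
  obtain ⟨m, s, hs⟩ := Module.Finite.exists_fin (R := K) (M := E)
  have hM0 : (0 : ℝ) ≤ ∑ i, n (s i) := Finset.sum_nonneg fun i _ => hn.1 _
  refine ⟨∑ i, n (s i), fun x => ?_⟩
  have hx : x ∈ Submodule.span K (Set.range s) := hs ▸ Submodule.mem_top
  induction hx using Submodule.span_induction with
  | mem y hy =>
      obtain ⟨i, rfl⟩ := hy
      exact Finset.single_le_sum (f := fun i => n (s i)) (fun i _ => hn.1 _) (Finset.mem_univ i)
  | zero => exact le_trans (le_of_eq ((hn.2.1 0).2 rfl)) hM0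
  | add y z hy hz ihy ihz => exact (hn.2.2.2 y z).trans (max_le ihy ihz)
  | smul a y hy ihy =>
      rcases eq_or_ne a 0 with rfl | ha
      · rw [zero_smul]
        exact le_trans (le_of_eq ((hn.2.1 0).2 rfl)) hM0
      · rw [hn.2.2.1 a y ha]; exact ihy

lemma pos {x : E} (hx : x ≠ 0) : 0 < n x :=
  lt_of_le_of_ne (hn.1 x) fun h => hx ((hn.2.1 x).1 h.symm)

lemma exists_pos [FiniteDimensional K E] : ∃ ε > 0, ∀ x : E, x ≠ 0 → ε ≤ n x := by
  by_contra hcon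
  push_neg at hcon
  obtain ⟨x₀, hx₀, -⟩ := hcon 1 one_pos
  let g : {x : E // x ≠ 0} → {x : E // x ≠ 0} := fun p =>
    ⟨(hcon (n p.1) (hn.pos p.2)).choose, ((hcon (n p.1) (hn.pos p.2)).choose_spec).1⟩
  have hg : ∀ p, n (g p).1 < n p.1 := fun p => ((hcon (n p.1) (hn.pos p.2)).choose_spec).2
  let seq : ℕ → {x : E // x ≠ 0} := fun k => g^[k] ⟨x₀, hx₀⟩
  have hseq : ∀ k, n (seq (k + 1)).1 < n (seq k).1 := by
    intro k
    have h1 : seq (k + 1) = g (seq k) := Function.iterate_succ_apply' g k _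
    rw [h1]; exact hg _
  have hdec : ∀ k, hn.level (n (seq (k + 1)).1) < hn.level (n (seq k).1) := by
    intro k
    rw [SetLike.lt_iff_le_and_exists]
    refine ⟨fun x hx => ?_, (seq k).1, Or.inr le_rfl, ?_⟩
    · rcases hx with rfl | hx
      · exact Or.inl rfl
      · exact Or.inr (hx.trans (hseq k).le)
    · rintro (h0 | hle)
      · exact (seq k).2 h0
      · exact absurd hle (not_le.2 (hseq k))
  have hart : IsArtinian K E := inferInstance
  exact RelEmbedding.not_wellFounded
    (RelEmbedding.natGT (fun k => hn.level (n (seq k).1)) hdec) wellFounded_lt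

end IsUltraNorm

end Helpers

/-- The map sending an ℝ-filtration to its associated norm is a bijection between
the set of (decreasing, exhaustive, separated, left-continuous) ℝ-filtrations on `E`
and the set of ultrametric norms on `E` over the trivially valued field `K`. -/
theorem filtration_norm_bijection (K E : Type*) [Field K] [AddCommGroup E] [Module K E]
    [FiniteDimensional K E] :
    Set.BijOn (normOfFiltration (K := K) (E := E)) Set.univ
      {n : E → ℝ | IsUltraNorm K n} := by
  refine ⟨fun 𝓕 _ => 𝓕.isUltraNorm, ?_, ?_⟩
  · -- injectivity
    intro 𝓕 _ 𝓖 _ h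
    refine RFiltration.ext' (funext fun t => ?_)
    ext x
    rcases eq_or_ne x 0 with rfl | hx
    · simp
    · have hx1 := congrFun h x
      rw [𝓕.norm_ne_zero hx, 𝓖.norm_ne_zero hx] at hx1
      have hT : sSup {t : ℝ | x ∈ 𝓕.F t} = sSup {t : ℝ | x ∈ 𝓖.F t} :=
        neg_injective (Real.exp_eq_exp.1 hx1)
      rw [𝓕.mem_iff hx, 𝓖.mem_iff hx, hT]
  · -- surjectivity
    intro n hn
    replace hn : IsUltraNorm K n := hn
    have h0 : n 0 = 0 := (hn.2.1 0).2 rfl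
    obtain ⟨M, hM⟩ := hn.bounded
    obtain ⟨ε, hε, hsep⟩ := hn.exists_pos
    have hanti : ∀ ⦃s t : ℝ⦄, s ≤ t →
        hn.level (Real.exp (-t)) ≤ hn.level (Real.exp (-s)) := by
      intro s t hst x hx
      rcases hx with rfl | hx
      · exact Or.inl rfl
      · exact Or.inr (hx.trans (Real.exp_le_exp.2 (neg_le_neg hst)))
    refine ⟨⟨fun t => hn.level (Real.exp (-t)), hanti, ?_, ?_, ?_⟩, Set.mem_univ _, ?_⟩
    · -- exhaustive
      refine ⟨-Real.log (M + 1), ?_⟩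
      rw [eq_top_iff]
      intro x _
      have hMpos : (0 : ℝ) < M + 1 := lt_of_le_of_lt ((hn.1 0).trans (hM 0)) (lt_add_one M)
      exact Or.inr (by rw [neg_neg, Real.exp_log hMpos]; exact (hM x).trans (by linarith))
    · -- separated
      refine ⟨-Real.log (ε / 2), ?_⟩
      rw [eq_bot_iff]
      rintro x (rfl | hx)
      · simp
      · rcases eq_or_ne x 0 with rfl | hx0
        · simp
        · exfalso
          rw [neg_neg, Real.exp_log (half_pos hε)] at hx
          linarith [hsep x hx0]
    · -- left continuity
      intro t
      refine le_antisymm (le_iInf fun s => le_iInf fun hs => hanti hs.le) ?_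
      intro x hx
      simp only [Submodule.mem_iInf] at hx
      rcases eq_or_ne x 0 with rfl | hx0
      · exact Or.inl rfl
      · refine Or.inr ?_
        have hxp := hn.pos hx0
        have hkey : ∀ s < t, s ≤ -Real.log (n x) := by
          intro s hs
          rcases hx s hs with rfl | hle
          · exact absurd rfl hx0
          · have := (Real.log_le_iff_le_exp hxp).2 hle
            linarith
        have ht : t ≤ -Real.log (n x) := by
          by_contra hcon2
          push_neg at hcon2
          obtain ⟨s, h1, h2⟩ := exists_between hcon2
          exact absurd (hkey s h2) (not_le.2 h1)
        calc n x = Real.exp (Real.log (n x)) := (Real.exp_log hxp).symm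
          _ ≤ Real.exp (-t) := Real.exp_le_exp.2 (by linarith)
    · -- the norm of this filtration is `n`
      funext x
      rcases eq_or_ne x 0 with rfl | hx0
      · simp [normOfFiltration, h0]
      · have hxp := hn.pos hx0
        have hset : {t : ℝ | x ∈ hn.level (Real.exp (-t))} = Set.Iic (-Real.log (n x)) := by
          ext t
          simp only [Set.mem_setOf_eq, Set.mem_Iic, IsUltraNorm.mem_level]
          constructor
          · rintro (rfl | hle)
            · exact absurd rfl hx0
            · have := (Real.log_le_iff_le_exp hxp).2 hle
              linarith
          · intro ht
            exact Or.inr (by rw [← Real.exp_log hxp]; exact Real.exp_le_exp.2 (by linarith))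
        show (if x = 0 then 0 else
          Real.exp (-(sSup {t : ℝ | x ∈ hn.level (Real.exp (-t))}))) = n x
        rw [if_neg hx0, hset, csSup_Iic, neg_neg, Real.exp_log hxp]
end

section
/- Let (E_n, ‖·‖_n)_{n∈ℕ} be an ultrametrically normed graded linear series of finite type over a trivially valued field K, satisfying strong δ-superadditivity with δ(n) = C ln dim_K(E_n). Suppose the graded algebra ⊕ E_n is generated in degrees ≤ N. Then liminf_{n→∞} μ_min(E_n,‖·‖_n)/n > −∞; more precisely, setting L = min_{1≤l≤N, E_l ≠ 0} (μ_min(E_l,‖·‖_l) − δ(l))/l, one has μ_min(E_n,‖·‖_n)/n ≥ L for every n ≥ 1 with E_n ≠ 0. -/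
open Filter

open Classical in
/-- The minimal slope `μ_min = −ln(max{‖x‖ : x ∈ V})` of a submodule `V` with norm
function `n`, with the convention `μ_min(0) = +∞`. -/
noncomputable def muMinSub {K R : Type*} [Field K] [CommRing R] [Algebra K R]
    (n : R → ℝ) (V : Submodule K R) : EReal :=
  if V = ⊥ then ⊤ else ((-(Real.log (sSup (n '' (V : Set R)))) : ℝ) : EReal)

/-- Products of elements of a graded family of submodules lie in the right graded piece
(for at least one factor; no assumption that `1 ∈ E 0`). -/
lemma prod_mem_graded {K R : Type*} [Field K] [CommRing R] [Algebra K R]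
    (E : ℕ → Submodule K R)
    (hmul : ∀ (a b : ℕ), ∀ s ∈ E a, ∀ t ∈ E b, s * t ∈ E (a + b)) :
    ∀ (r : ℕ) (lam : Fin r → ℕ) (s : Fin r → R), 1 ≤ r → (∀ i, s i ∈ E (lam i)) →
      ∏ i, s i ∈ E (∑ i, lam i) := by
  intro r
  induction r with
  | zero => omega
  | succ m ih =>
    intro lam s _ hmem
    rcases Nat.eq_zero_or_pos m with hm | hm
    · subst hm
      simpa [Fin.prod_univ_one, Fin.sum_univ_one] using hmem 0
    · rw [Fin.prod_univ_castSucc, Fin.sum_univ_castSucc]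
      exact hmul _ _ _ (ih (fun i => lam i.castSucc) (fun i => s i.castSucc) hm
        (fun i => hmem i.castSucc)) _ (hmem (Fin.last m))

/-- Boundedness of the asymptotic minimal slope for a finitely generated (in degrees
`≤ N`), strongly δ-superadditive, ultrametrically normed graded linear series over a
trivially valued field, with `δ n = C ln dim Eₙ`:
`liminf μ_min(Eₙ)/n > −∞`, and precisely `μ_min(Eₙ)/n ≥ L` with
`L = min_{1 ≤ l ≤ N, E_l ≠ 0} (μ_min(E_l) − δ l)/l`. -/
theorem muMin_inf_bounded_of_finite_type {K R : Type*} [Field K] [CommRing R] [Algebra K R]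
    (E : ℕ → Submodule K R)
    (hmul : ∀ (a b : ℕ), ∀ s ∈ E a, ∀ t ∈ E b, s * t ∈ E (a + b))
    (hfd : ∀ a, FiniteDimensional K (E a))
    (ν : ℕ → R → ℝ)
    (hnonneg : ∀ a (s : R), 0 ≤ ν a s)
    (hzero : ∀ a, ∀ s ∈ E a, (ν a s = 0 ↔ s = 0))
    (hsmul : ∀ a (c : K), ∀ s ∈ E a, c ≠ 0 → ν a (c • s) = ν a s)
    (hultra : ∀ a, ∀ s ∈ E a, ∀ t ∈ E a, ν a (s + t) ≤ max (ν a s) (ν a t))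
    (C : ℝ) (hC : 0 ≤ C)
    (δ : ℕ → ℝ) (hδ : ∀ a : ℕ, δ a = C * Real.log (Module.finrank K (E a)))
    (hstrong : ∀ (r : ℕ) (lam : Fin r → ℕ) (s : Fin r → R), 2 ≤ r →
      (∀ i, s i ∈ E (lam i)) →
      ν (∑ i, lam i) (∏ i, s i) ≤ (∏ i, ν (lam i) (s i)) * Real.exp (∑ i, δ (lam i)))
    (N : ℕ) (hN : 1 ≤ N)
    (hgen : ∀ n : ℕ, 1 ≤ n → E n ≤ Submodule.span K
      {x : R | ∃ (r : ℕ) (lam : Fin r → ℕ) (s : Fin r → R),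
        (∀ i, 1 ≤ lam i ∧ lam i ≤ N ∧ s i ∈ E (lam i)) ∧ (∑ i, lam i) = n ∧ x = ∏ i, s i}) :
    (∀ n : ℕ, 1 ≤ n → E n ≠ ⊥ →
      sInf {x : ℝ | ∃ l : ℕ, 1 ≤ l ∧ l ≤ N ∧ E l ≠ ⊥ ∧
          x = (-(Real.log (sSup (ν l '' (E l : Set R)))) - δ l) / l}
        ≤ -(Real.log (sSup (ν n '' (E n : Set R)))) / n) ∧
    ⊥ < liminf (fun a : ℕ => muMinSub (ν a) (E a) * (((a : ℝ)⁻¹ : ℝ) : EReal)) atTop := by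
  classical
  set M : ℕ → ℝ := fun a => sSup (ν a '' (E a : Set R)) with hMdef
  set S : Set ℝ := {x : ℝ | ∃ l : ℕ, 1 ≤ l ∧ l ≤ N ∧ E l ≠ ⊥ ∧
      x = (-(Real.log (M l)) - δ l) / l} with hSdef
  set L : ℝ := sInf S with hLdef
  have hν0 : ∀ a, ν a 0 = 0 := fun a => (hzero a 0 (zero_mem _)).mpr rfl
  -- boundedness of the norm on each graded piece
  have hbdd : ∀ a, BddAbove (ν a '' ((E a : Set R))) := by
    intro a
    have : Module.Finite K (E a) := hfd a
    obtain ⟨t, ht⟩ : (E a).FG := (Submodule.fg_top (E a)).mp (Module.finite_def.mp this)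
    set B : ℝ := (insert (0 : R) t).sup' (Finset.insert_nonempty _ _) (ν a) with hB
    have hzeroB : (0 : ℝ) ≤ B := by
      have := Finset.le_sup' (ν a) (Finset.mem_insert_self (0 : R) t)
      rwa [hν0] at this
    refine ⟨B, ?_⟩
    rintro y ⟨x, hx, rfl⟩
    rw [← ht] at hx
    induction hx using Submodule.span_induction with
    | mem x hxt => exact Finset.le_sup' (ν a) (Finset.mem_insert_of_mem hxt)
    | zero => rw [hν0]; exact hzeroB
    | add x y hx hy ihx ihy =>
      have hx' : x ∈ E a := by rw [← ht]; exact hx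
      have hy' : y ∈ E a := by rw [← ht]; exact hy
      exact (hultra a x hx' y hy').trans (max_le ihx ihy)
    | smul c x hx ih =>
      rcases eq_or_ne c 0 with rfl | hc
      · rw [zero_smul, hν0]; exact hzeroB
      · have hx' : x ∈ E a := by rw [← ht]; exact hx
        rw [hsmul a c x hx' hc]; exact ih
  have hle_M : ∀ a, ∀ s ∈ E a, ν a s ≤ M a := by
    intro a s hs
    exact le_csSup (hbdd a) ⟨s, hs, rfl⟩
  have hMpos : ∀ a, E a ≠ ⊥ → 0 < M a := by
    intro a ha
    obtain ⟨s, hs, hs0⟩ := Submodule.exists_mem_ne_zero_of_ne_bot ha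
    have h1 : 0 < ν a s := lt_of_le_of_ne (hnonneg a s)
      (fun h => hs0 ((hzero a s hs).mp h.symm))
    exact h1.trans_le (hle_M a s hs)
  have hδnn : ∀ a, E a ≠ ⊥ → 0 ≤ δ a := by
    intro a ha
    rw [hδ]
    refine mul_nonneg hC (Real.log_nonneg ?_)
    have : Nontrivial (E a) := (Submodule.nontrivial_iff_ne_bot).mpr ha
    have : 0 < Module.finrank K (E a) := Module.finrank_pos_iff.mpr this
    exact_mod_cast this
  -- the set S is bounded below (it is finite)
  have hSfin : S.Finite := by
    have : S ⊆ (fun l : ℕ => (-(Real.log (M l)) - δ l) / l) '' (Set.Icc 1 N) := by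
      rintro x ⟨l, h1, h2, _, rfl⟩
      exact ⟨l, ⟨h1, h2⟩, rfl⟩
    exact ((Set.finite_Icc 1 N).image _).subset this
  have hSbdd : BddBelow S := hSfin.bddBelow
  have hSle : ∀ l : ℕ, 1 ≤ l → l ≤ N → E l ≠ ⊥ →
      L ≤ (-(Real.log (M l)) - δ l) / l :=
    fun l h1 h2 h3 => csInf_le hSbdd ⟨l, h1, h2, h3, rfl⟩
  -- bound for the generator pieces
  have hgenbound : ∀ l : ℕ, 1 ≤ l → l ≤ N → E l ≠ ⊥ →
      M l ≤ Real.exp (-(l : ℝ) * L - δ l) := by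
    intro l h1 h2 h3
    have hl : (0 : ℝ) < l := by exact_mod_cast h1
    have := hSle l h1 h2 h3
    rw [le_div_iff₀ hl] at this
    have hlog : Real.log (M l) ≤ -(l : ℝ) * L - δ l := by nlinarith
    exact (Real.log_le_iff_le_exp (hMpos l h3)).mp hlog
  -- S is nonempty whenever some E n (n ≥ 1) is nonzero
  have hSne : ∀ n : ℕ, 1 ≤ n → E n ≠ ⊥ → S.Nonempty := by
    intro n hn hEn
    by_contra hempty
    have hbot : ∀ l, 1 ≤ l → l ≤ N → E l = ⊥ := by
      intro l h1 h2
      by_contra h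
      exact hempty ⟨_, l, h1, h2, h, rfl⟩
    obtain ⟨s, hs, hs0⟩ := Submodule.exists_mem_ne_zero_of_ne_bot hEn
    have hspan := hgen n hn hs
    have hle : Submodule.span K {x : R | ∃ (r : ℕ) (lam : Fin r → ℕ) (sf : Fin r → R),
        (∀ i, 1 ≤ lam i ∧ lam i ≤ N ∧ sf i ∈ E (lam i)) ∧ (∑ i, lam i) = n ∧ x = ∏ i, sf i}
        ≤ ⊥ := by
      rw [Submodule.span_le]
      rintro x ⟨r, lam, sf, hp, hsum, rfl⟩
      have hr : 1 ≤ r := by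
        rcases Nat.eq_zero_or_pos r with rfl | h
        · simp at hsum; omega
        · exact h
      have i0 : Fin r := ⟨0, hr⟩
      have hsf0 : sf i0 = 0 := by
        have h := (hp i0).2.2
        rw [hbot (lam i0) (hp i0).1 (hp i0).2.1] at h
        simpa using h
      have : (∏ i, sf i) = 0 := Finset.prod_eq_zero (Finset.mem_univ i0) hsf0
      simp [this]
    exact hs0 (by simpa using hle hspan)
  -- the key pointwise bound
  have key : ∀ n : ℕ, 1 ≤ n → S.Nonempty → ∀ s ∈ E n, ν n s ≤ Real.exp (-(n : ℝ) * L) := by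
    intro n hn hS s hs
    have hspan := hgen n hn hs
    have main : ∀ x ∈ Submodule.span K {x : R | ∃ (r : ℕ) (lam : Fin r → ℕ) (sf : Fin r → R),
        (∀ i, 1 ≤ lam i ∧ lam i ≤ N ∧ sf i ∈ E (lam i)) ∧ (∑ i, lam i) = n ∧ x = ∏ i, sf i},
        x ∈ E n ∧ ν n x ≤ Real.exp (-(n : ℝ) * L) := by
      intro x hx
      induction hx using Submodule.span_induction with
      | mem x hxG =>
        obtain ⟨r, lam, sf, hp, hsum, rfl⟩ := hxG
        have hr : 1 ≤ r := by
          rcases Nat.eq_zero_or_pos r with rfl | h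
          · simp at hsum; omega
          · exact h
        have hmem : ∀ i, sf i ∈ E (lam i) := fun i => (hp i).2.2
        have hmemE : (∏ i, sf i) ∈ E n := by
          rw [← hsum]
          exact prod_mem_graded E hmul r lam sf hr hmem
        refine ⟨hmemE, ?_⟩
        by_cases hz : ∃ i, sf i = 0
        · obtain ⟨i, hi⟩ := hz
          have : (∏ i, sf i) = 0 := Finset.prod_eq_zero (Finset.mem_univ i) hi
          rw [this, hν0]
          positivity
        · push_neg at hz
          have hEl : ∀ i, E (lam i) ≠ ⊥ := by
            intro i hbot
            have := hmem i
            rw [hbot] at this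
            exact hz i (by simpa using this)
          have hMb : ∀ i, ν (lam i) (sf i) ≤ Real.exp (-(lam i : ℝ) * L - δ (lam i)) :=
            fun i => (hle_M _ _ (hmem i)).trans
              (hgenbound (lam i) (hp i).1 (hp i).2.1 (hEl i))
          rcases eq_or_lt_of_le hr with hr1 | hr2
          · -- r = 1
            obtain rfl : r = 1 := hr1.symm
            have h0 : lam 0 = n := by simpa [Fin.sum_univ_one] using hsum
            have : ν n (∏ i, sf i) ≤ Real.exp (-(n : ℝ) * L - δ n) := by
              rw [Fin.prod_univ_one, ← h0]
              exact hMb 0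
            refine this.trans (Real.exp_le_exp.mpr ?_)
            have := hδnn n (h0 ▸ hEl 0)
            linarith
          · -- r ≥ 2
            have h2 : 2 ≤ r := hr2
            have hprod : (∏ i, ν (lam i) (sf i)) ≤
                ∏ i, Real.exp (-(lam i : ℝ) * L - δ (lam i)) :=
              Finset.prod_le_prod (fun i _ => hnonneg _ _) (fun i _ => hMb i)
            have hexp : (∏ i : Fin r, Real.exp (-(lam i : ℝ) * L - δ (lam i)))
                = Real.exp (-(n : ℝ) * L - ∑ i, δ (lam i)) := by
              rw [← Real.exp_sum]
              congr 1
              rw [Finset.sum_sub_distrib, ← Finset.sum_mul, Finset.sum_neg_distrib,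
                ← Nat.cast_sum, hsum]
            calc ν n (∏ i, sf i) = ν (∑ i, lam i) (∏ i, sf i) := by rw [hsum]
              _ ≤ (∏ i, ν (lam i) (sf i)) * Real.exp (∑ i, δ (lam i)) :=
                  hstrong r lam sf h2 hmem
              _ ≤ Real.exp (-(n : ℝ) * L - ∑ i, δ (lam i)) * Real.exp (∑ i, δ (lam i)) := by
                  apply mul_le_mul_of_nonneg_right _ (Real.exp_pos _).le
                  rw [← hexp]; exact hprod
              _ = Real.exp (-(n : ℝ) * L) := by
                  rw [← Real.exp_add]; ring_nf
      | zero =>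
        refine ⟨zero_mem _, ?_⟩
        rw [hν0]; positivity
      | add x y hx hy ihx ihy =>
        exact ⟨add_mem ihx.1 ihy.1,
          (hultra n x ihx.1 y ihy.1).trans (max_le ihx.2 ihy.2)⟩
      | smul c x hx ih =>
        rcases eq_or_ne c 0 with rfl | hc
        · rw [zero_smul]
          refine ⟨zero_mem _, ?_⟩
          rw [hν0]; positivity
        · refine ⟨Submodule.smul_mem _ _ ih.1, ?_⟩
          rw [hsmul n c x ih.1 hc]; exact ih.2
    exact (main s hspan).2
  -- Part 1
  have part1 : ∀ n : ℕ, 1 ≤ n → E n ≠ ⊥ → L ≤ -(Real.log (M n)) / n := by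
    intro n hn hEn
    have hS := hSne n hn hEn
    have hMle : M n ≤ Real.exp (-(n : ℝ) * L) := by
      apply Real.sSup_le _ (Real.exp_pos _).le
      rintro y ⟨s, hs, rfl⟩
      exact key n hn hS s hs
    have hlog : Real.log (M n) ≤ -(n : ℝ) * L :=
      (Real.log_le_iff_le_exp (hMpos n hEn)).mpr hMle
    have hn' : (0 : ℝ) < n := by exact_mod_cast hn
    rw [le_div_iff₀ hn']
    nlinarith
  refine ⟨part1, ?_⟩
  -- Part 2
  by_cases hS : S.Nonempty
  · have hev : ∀ᶠ a : ℕ in atTop,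
        (L : EReal) ≤ muMinSub (ν a) (E a) * (((a : ℝ)⁻¹ : ℝ) : EReal) := by
      rw [eventually_atTop]
      refine ⟨1, fun a ha => ?_⟩
      have ha' : (0 : ℝ) < (a : ℝ)⁻¹ := by positivity
      by_cases hEa : E a = ⊥
      · rw [muMinSub, if_pos hEa, EReal.top_mul_of_pos (by exact_mod_cast EReal.coe_pos.mpr ha')]
        exact le_top
      · rw [muMinSub, if_neg hEa, ← EReal.coe_mul, EReal.coe_le_coe_iff]
        have := part1 a ha hEa
        rw [div_eq_mul_inv] at this
        exact this
    have h1 : (L : EReal) ≤ liminf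
        (fun a : ℕ => muMinSub (ν a) (E a) * (((a : ℝ)⁻¹ : ℝ) : EReal)) atTop := by
      have := Filter.liminf_le_liminf hev
      rwa [liminf_const] at this
    exact lt_of_lt_of_le (EReal.bot_lt_coe L) h1
  · have hall : ∀ n : ℕ, 1 ≤ n → E n = ⊥ := by
      intro n hn
      by_contra h
      exact hS (hSne n hn h)
    have hev : ∀ᶠ a : ℕ in atTop,
        ((0 : ℝ) : EReal) ≤ muMinSub (ν a) (E a) * (((a : ℝ)⁻¹ : ℝ) : EReal) := by
      rw [eventually_atTop]
      refine ⟨1, fun a ha => ?_⟩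
      have ha' : (0 : ℝ) < (a : ℝ)⁻¹ := by positivity
      rw [muMinSub, if_pos (hall a ha),
        EReal.top_mul_of_pos (by exact_mod_cast EReal.coe_pos.mpr ha')]
      exact le_top
    have h1 : ((0 : ℝ) : EReal) ≤ liminf
        (fun a : ℕ => muMinSub (ν a) (E a) * (((a : ℝ)⁻¹ : ℝ) : EReal)) atTop := by
      have := Filter.liminf_le_liminf hev
      rwa [liminf_const] at this
    exact lt_of_lt_of_le (EReal.bot_lt_coe 0) h1
end
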